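/- Let E be a regular expression over an alphabet Σ and let w₁, θ, w₂ be words over Σ. Then the set {i ∈ ℕ : w₁ ++ θ^i ++ w₂ ∈ L(E)} is ultimately periodic, where L(E) is the language matched by E. -/

import Mathlib

/-!
Every left quotient `L(E) \ x` is a union of languages of Antimirov partial derivatives of `E`,
which all lie in a finite set; hence `L(E)` has finitely many left quotients, i.e. it is regular
(Myhill–Nerode). For a regular `L`, the quotients `L \ (w₁ ++ θ^i)` form an orbit of the map
`K ↦ K \ θ` inside this finite set, so they are ultimately periodic in `i`, and so is the
membership of `w₂` in them.
-/

/-- `wpow u k` is the `k`-fold concatenation of the word `u` with itself. -/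
def wpow {α : Type*} (u : List α) : ℕ → List α
  | 0 => []
  | k + 1 => u ++ wpow u k

/-- A set `S ⊆ ℕ` is ultimately periodic if there are `μ` and `λ ≥ 1` such that
for every `n ≥ μ`, `n ∈ S ↔ n + λ ∈ S`. -/
def UltimatelyPeriodic (S : Set ℕ) : Prop :=
  ∃ μ lam : ℕ, 1 ≤ lam ∧ ∀ n : ℕ, μ ≤ n → (n ∈ S ↔ n + lam ∈ S)

open Computability

namespace Language

variable {α : Type*}

theorem cons_mem_mul_iff {l m : Language α} {a : α} {w : List α} :
    a :: w ∈ l * m ↔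
      (∃ u v, a :: u ∈ l ∧ v ∈ m ∧ u ++ v = w) ∨ ([] ∈ l ∧ a :: w ∈ m) := by
  rw [mem_mul]
  constructor
  · rintro ⟨_ | ⟨b, u⟩, hu, v, hv, huv⟩
    · rw [List.nil_append] at huv
      exact .inr ⟨hu, huv ▸ hv⟩
    · obtain ⟨rfl, rfl⟩ := List.cons_eq_cons.1 huv
      exact .inl ⟨u, v, hu, hv, rfl⟩
  · rintro (⟨u, v, hu, hv, rfl⟩ | ⟨hnil, hw⟩)
    · exact ⟨_, hu, v, hv, rfl⟩
    · exact ⟨[], hnil, _, hw, rfl⟩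

theorem cons_mem_kstar_iff {l : Language α} {a : α} {w : List α} :
    a :: w ∈ l∗ ↔ ∃ u v, a :: u ∈ l ∧ v ∈ l∗ ∧ u ++ v = w := by
  constructor
  · rw [mem_kstar_iff_exists_nonempty]
    rintro ⟨_ | ⟨_ | ⟨b, u⟩, S⟩, hw, hS⟩
    · simp at hw
    · exact absurd rfl (hS [] List.mem_cons_self).2
    · rw [List.flatten_cons, List.cons_append, List.cons_eq_cons] at hw
      obtain ⟨rfl, rfl⟩ := hw
      exact ⟨u, S.flatten, (hS _ List.mem_cons_self).1,
        join_mem_kstar fun y hy => (hS y (List.mem_cons_of_mem _ hy)).1, rfl⟩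
  · rintro ⟨u, v, hu, hv, rfl⟩
    exact (mul_kstar_le_kstar : l * l∗ ≤ l∗) (append_mem_mul hu hv)

end Language

theorem wpow_succ' {α : Type*} (u : List α) (k : ℕ) : wpow u (k + 1) = wpow u k ++ u := by
  induction k with
  | zero => simp [wpow]
  | succ k ih => rw [wpow, ih, ← List.append_assoc, ← ih]; rfl

namespace RegularExpression

variable {α : Type*}

/-- Antimirov's partial derivatives. -/
def pderiv (a : α) : RegularExpression α → Set (RegularExpression α)
  | zero => ∅
  | epsilon => ∅
  | char b => {F | a = b ∧ F = epsilon}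
  | plus P Q => pderiv a P ∪ pderiv a Q
  | comp P Q => (comp · Q) '' pderiv a P ∪ {F | [] ∈ P.matches' ∧ F ∈ pderiv a Q}
  | star P => (comp · P.star) '' pderiv a P

/-- Antimirov's `π(E)`, a finite set closed under partial derivatives. -/
def pderivSupport : RegularExpression α → Set (RegularExpression α)
  | zero => ∅
  | epsilon => ∅
  | char _ => {epsilon}
  | plus P Q => pderivSupport P ∪ pderivSupport Q
  | comp P Q => (comp · Q) '' pderivSupport P ∪ pderivSupport Q
  | star P => (comp · P.star) '' pderivSupport P

theorem finite_pderivSupport (E : RegularExpression α) : (pderivSupport E).Finite := by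
  induction E with
  | zero | epsilon => exact Set.finite_empty
  | char => exact Set.finite_singleton _
  | plus P Q hP hQ => exact hP.union hQ
  | comp P Q hP hQ => exact (hP.image _).union hQ
  | star P hP => exact hP.image _

theorem pderiv_subset_pderivSupport {a : α} {E F : RegularExpression α}
    (hF : F ∈ insert E (pderivSupport E)) : pderiv a F ⊆ pderivSupport E := by
  induction E generalizing F with
  | zero | epsilon => simp_all [pderivSupport, pderiv]
  | char b =>
    rcases hF with rfl | rfl
    · rintro _ ⟨-, rfl⟩; rfl
    · simp [pderiv]
  | plus P Q hP hQ =>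
    rcases hF with rfl | hF | hF
    · exact Set.union_subset_union (hP (Set.mem_insert _ _)) (hQ (Set.mem_insert _ _))
    · exact (hP (Set.mem_insert_of_mem _ hF)).trans Set.subset_union_left
    · exact (hQ (Set.mem_insert_of_mem _ hF)).trans Set.subset_union_right
  | comp P Q hP hQ =>
    obtain ⟨G, hG, rfl⟩ | hF :
        (∃ G ∈ insert P (pderivSupport P), F = comp G Q) ∨ F ∈ pderivSupport Q := by
      rcases hF with rfl | ⟨G, hG, rfl⟩ | hF
      exacts [.inl ⟨P, Set.mem_insert _ _, rfl⟩, .inl ⟨G, Set.mem_insert_of_mem _ hG, rfl⟩,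
        .inr hF]
    · exact Set.union_subset_union (Set.image_mono (hP hG))
        fun K hK => hQ (Set.mem_insert _ _) hK.2
    · exact (hQ (Set.mem_insert_of_mem _ hF)).trans Set.subset_union_right
  | star P hP =>
    rcases hF with rfl | ⟨G, hG, rfl⟩
    · exact Set.image_mono (hP (Set.mem_insert _ _))
    · exact Set.union_subset (Set.image_mono (hP (Set.mem_insert_of_mem _ hG)))
        fun K hK => Set.image_mono (hP (Set.mem_insert _ _)) hK.2

theorem cons_mem_matches'_iff (a : α) (w : List α) (E : RegularExpression α) :
    a :: w ∈ E.matches' ↔ ∃ F ∈ pderiv a E, w ∈ F.matches' := by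
  induction E generalizing w with
  | zero => simp [pderiv]
  | epsilon => simp [pderiv]
  | char b => simp [pderiv, show a :: w ∈ ({[b]} : Language α) ↔ a :: w = [b] from Iff.rfl]
  | plus P Q hP hQ =>
    show a :: w ∈ P.matches' + Q.matches' ↔ _
    simp only [Language.mem_add, hP, hQ, pderiv, Set.mem_union, or_and_right, exists_or]
  | comp P Q hP hQ =>
    show a :: w ∈ P.matches' * Q.matches' ↔ _
    simp only [Language.cons_mem_mul_iff, hP, hQ, pderiv, Set.mem_union, Set.mem_image,
      Set.mem_ofPred_eq]
    constructor
    · rintro (⟨u, v, ⟨G, hG, hu⟩, hv, rfl⟩ | ⟨hnil, G, hG, hw⟩)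
      · exact ⟨G.comp Q, .inl ⟨G, hG, rfl⟩, Language.append_mem_mul hu hv⟩
      · exact ⟨G, .inr ⟨hnil, hG⟩, hw⟩
    · rintro ⟨_, ⟨G, hG, rfl⟩ | ⟨hnil, hG⟩, hw⟩
      · obtain ⟨u, hu, v, hv, rfl⟩ := Language.mem_mul.1 hw
        exact .inl ⟨u, v, ⟨G, hG, hu⟩, hv, rfl⟩
      · exact .inr ⟨hnil, _, hG, hw⟩
  | star P hP =>
    show a :: w ∈ P.matches'∗ ↔ _
    simp only [Language.cons_mem_kstar_iff, hP, pderiv, Set.mem_image]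
    constructor
    · rintro ⟨u, v, ⟨G, hG, hu⟩, hv, rfl⟩
      exact ⟨G.comp P.star, ⟨G, hG, rfl⟩, Language.append_mem_mul hu hv⟩
    · rintro ⟨_, ⟨G, hG, rfl⟩, hw⟩
      obtain ⟨u, hu, v, hv, rfl⟩ := Language.mem_mul.1 hw
      exact ⟨u, v, ⟨G, hG, hu⟩, hv, rfl⟩

theorem exists_leftQuotient_eq_iSup (E : RegularExpression α) (x : List α) :
    ∃ S ⊆ insert E (pderivSupport E), E.matches'.leftQuotient x = ⨆ F ∈ S, F.matches' := by
  induction x using List.reverseRecOn with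
  | nil => exact ⟨{E}, by simp, by simp⟩
  | append_singleton x a ih =>
    obtain ⟨S, hS, hx⟩ := ih
    refine ⟨⋃ F ∈ S, pderiv a F, Set.iUnion₂_subset fun F hF =>
      (pderiv_subset_pderivSupport (hS hF)).trans (Set.subset_insert _ _), ?_⟩
    ext w
    simp only [Language.leftQuotient_append, hx, Language.mem_leftQuotient, Language.mem_iSup,
      List.singleton_append, cons_mem_matches'_iff, Set.mem_iUnion, exists_prop]
    exact ⟨fun ⟨F, hF, G, hG, hw⟩ => ⟨G, ⟨F, hF, hG⟩, hw⟩,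
      fun ⟨G, ⟨F, hF, hG⟩, hw⟩ => ⟨F, hF, G, hG, hw⟩⟩

theorem finite_range_leftQuotient_matches' (E : RegularExpression α) :
    (Set.range E.matches'.leftQuotient).Finite := by
  refine (((finite_pderivSupport E).insert E).powerset.image
    fun S => ⨆ F ∈ S, F.matches').subset ?_
  rintro _ ⟨x, rfl⟩
  obtain ⟨S, hS, hx⟩ := exists_leftQuotient_eq_iSup E x
  exact ⟨S, hS, hx.symm⟩

theorem isRegular_matches' (E : RegularExpression α) : E.matches'.IsRegular :=
  .of_finite_range_leftQuotient (finite_range_leftQuotient_matches' E)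

end RegularExpression

theorem ultimatelyPeriodic_preimage_of_finite_range {β : Type*} {u : ℕ → β} (g : β → β)
    (hu : (Set.range u).Finite) (hg : ∀ n, u (n + 1) = g (u n)) (s : Set β) :
    UltimatelyPeriodic (u ⁻¹' s) := by
  obtain ⟨m, n, hmn, hu_eq⟩ := hu.exists_lt_map_eq_of_forall_mem (f := u) Set.mem_range_self
  have hper : ∀ k, m ≤ k → u (k + (n - m)) = u k := by
    intro k hk
    induction k, hk using Nat.le_induction with
    | base => rw [Nat.add_sub_cancel' hmn.le, hu_eq]
    | succ k _ ih => rw [Nat.add_right_comm, hg, ih, hg]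
  exact ⟨m, n - m, by omega, fun k hk => by simp [hper k hk]⟩

theorem Language.IsRegular.ultimatelyPeriodic_append_wpow_append {α : Type*} {L : Language α}
    (hL : L.IsRegular) (w₁ θ w₂ : List α) :
    UltimatelyPeriodic {i : ℕ | w₁ ++ wpow θ i ++ w₂ ∈ L} :=
  ultimatelyPeriodic_preimage_of_finite_range (u := fun i => L.leftQuotient (w₁ ++ wpow θ i))
    (·.leftQuotient θ)
    (hL.finite_range_leftQuotient.subset (Set.range_comp_subset_range _ L.leftQuotient))
    (fun i => by rw [wpow_succ', ← List.append_assoc, Language.leftQuotient_append])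
    {K | w₂ ∈ K}

theorem stmt10 {α : Type*} (E : RegularExpression α) (w₁ θ w₂ : List α) :
    UltimatelyPeriodic {i : ℕ | w₁ ++ wpow θ i ++ w₂ ∈ E.matches'} :=
  E.isRegular_matches'.ultimatelyPeriodic_append_wpow_append w₁ θ w₂
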